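/- arXiv:2106.04467 — 6 statements merged into one kernel-verified Lean document; each statement's English description precedes it below -/
import Mathlib

section
/- Define P(a | g, q) := ((2m(1−λ)−1)·p_g(q(g,a)) + λ)/(2m−1), the probability that a Q&A user in group g assigned query q answers a. Then the maximum over q ∈ 𝒬, a ∈ {1,…,2m}, and groups g ≠ g' of the likelihood ratio P(a | g, q)/P(a | g', q) equals the maximum over v, v' ∈ V and groups g ≠ g' of ((2m(1−λ)−1)·p_g(v) + λ)/((2m(1−λ)−1)·p_{g'}(v') + λ). (This is the privacy level e^{ε_QA} of the Q&A scheme, Theorem 1, part 2.) -/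
open scoped BigOperators

noncomputable section

/-- The value alphabet `V = {±1, …, ±m} ⊆ ℤ`. -/
def Vset (m : ℕ) : Finset ℤ := (Finset.Icc (-(m : ℤ)) m).erase 0

/-- Values as a (finite) type. -/
abbrev Vt (m : ℕ) : Type := {v : ℤ // v ∈ Vset m}

/-- Query matrices: `k × 2m` matrices whose rows are permutations of `V`,
encoded row-wise as equivalences between column indices and values. -/
abbrev Query (k m : ℕ) : Type := Fin k → (Fin (2*m) ≃ Vt m)

/-- The randomized response channel `RR_λ` on `V`: probability that input `v`
is turned into output `w`. -/
def RR (m : ℕ) (lam : ℝ) (v w : Vt m) : ℝ :=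
  if w = v then 1 - lam else lam / (2*m - 1)

lemma card_Vset (m : ℕ) : (Vset m).card = 2*m := by
  have h0 : (0:ℤ) ∈ Finset.Icc (-(m : ℤ)) m := by
    simp [Finset.mem_Icc]
  rw [Vset, Finset.card_erase_of_mem h0, Int.card_Icc]
  omega

lemma card_Vt (m : ℕ) : Fintype.card (Vt m) = 2*m := by
  simpa [Fintype.card_coe] using card_Vset m

lemma div_div_same' (a b c : ℝ) (hc : c ≠ 0) : (a/c)/(b/c) = a/b := by
  rcases eq_or_ne b 0 with hb | hb
  · simp [hb]
  · field_simp

/-- With `P(a | g, q) := ((2m(1−λ)−1)·p_g(q(g,a)) + λ)/(2m−1)`,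
the maximum over queries `q ∈ 𝒬`, answers `a`, and pairs of distinct groups
`g ≠ g'` of the likelihood ratio `P(a|g,q)/P(a|g',q)` equals the maximum over
values `v, v' ∈ V` and distinct groups `g ≠ g'` of
`((2m(1−λ)−1)·p_g(v) + λ)/((2m(1−λ)−1)·p_{g'}(v') + λ)`. -/
theorem stmt1 (m k : ℕ) (hm : 0 < m) (hk : 2 ≤ k)
    (p : Fin k → Vt m → ℝ)
    (hpsum : ∀ g, ∑ v : Vt m, p g v = 1)
    (hp : ∀ g v, 0 < p g v ∧ p g v < 1)
    (lam : ℝ) (hlam0 : 0 ≤ lam) (hlam1 : lam < 1 - 1/(2*m)) :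
    (⨆ q : Query k m, ⨆ a : Fin (2*m), ⨆ gg : {x : Fin k × Fin k // x.1 ≠ x.2},
        (((2*m*(1-lam) - 1) * p gg.1.1 (q gg.1.1 a) + lam) / (2*m - 1)) /
        (((2*m*(1-lam) - 1) * p gg.1.2 (q gg.1.2 a) + lam) / (2*m - 1)))
    = ⨆ vv : Vt m × Vt m, ⨆ gg : {x : Fin k × Fin k // x.1 ≠ x.2},
        ((2*m*(1-lam) - 1) * p gg.1.1 vv.1 + lam) /
        ((2*m*(1-lam) - 1) * p gg.1.2 vv.2 + lam) := by
  have hm2 : ((2:ℝ)*m - 1) ≠ 0 := by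
    have : (1:ℝ) ≤ (m:ℝ) := by exact_mod_cast hm
    nlinarith
  have hterm : ∀ (q : Query k m) (a : Fin (2*m)) (gg : {x : Fin k × Fin k // x.1 ≠ x.2}),
      (((2*m*(1-lam) - 1) * p gg.1.1 (q gg.1.1 a) + lam) / (2*m - 1)) /
      (((2*m*(1-lam) - 1) * p gg.1.2 (q gg.1.2 a) + lam) / (2*m - 1))
      = ((2*m*(1-lam) - 1) * p gg.1.1 (q gg.1.1 a) + lam) /
        ((2*m*(1-lam) - 1) * p gg.1.2 (q gg.1.2 a) + lam) :=
    fun q a gg => div_div_same' _ _ _ hm2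
  have hm' : 0 < 2*m := by omega
  let a0 : Fin (2*m) := ⟨0, hm'⟩
  let e0 : Fin (2*m) ≃ Vt m := (Fintype.equivFinOfCardEq (card_Vt m)).symm
  haveI : Nonempty (Vt m) := ⟨e0 a0⟩
  haveI : Nonempty (Fin (2*m)) := ⟨a0⟩
  haveI : Nonempty (Query k m) := ⟨fun _ => e0⟩
  haveI hne : Nonempty {x : Fin k × Fin k // x.1 ≠ x.2} :=
    ⟨⟨(⟨0, by omega⟩, ⟨1, by omega⟩), by
      intro h
      have := congrArg Fin.val h
      simp at this⟩⟩
  set T : Query k m → Fin (2*m) → {x : Fin k × Fin k // x.1 ≠ x.2} → ℝ :=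
    fun q a gg => ((2*m*(1-lam) - 1) * p gg.1.1 (q gg.1.1 a) + lam) /
        ((2*m*(1-lam) - 1) * p gg.1.2 (q gg.1.2 a) + lam) with hT
  set S : Vt m × Vt m → {x : Fin k × Fin k // x.1 ≠ x.2} → ℝ :=
    fun vv gg => ((2*m*(1-lam) - 1) * p gg.1.1 vv.1 + lam) /
        ((2*m*(1-lam) - 1) * p gg.1.2 vv.2 + lam) with hS
  have hTS : ∀ q a gg, T q a gg = S (q gg.1.1 a, q gg.1.2 a) gg := fun _ _ _ => rfl
  simp only [hterm]
  show (⨆ q, ⨆ a, ⨆ gg, T q a gg) = ⨆ vv, ⨆ gg, S vv gg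
  apply le_antisymm
  · refine ciSup_le fun q => ciSup_le fun a => ciSup_le fun gg => ?_
    rw [hTS]
    refine le_trans (le_ciSup (f := fun gg' => S (q gg.1.1 a, q gg.1.2 a) gg')
      (Set.Finite.bddAbove (Set.finite_range _)) gg) ?_
    exact le_ciSup (f := fun vv => ⨆ gg', S vv gg')
      (Set.Finite.bddAbove (Set.finite_range _)) ((q gg.1.1 a, q gg.1.2 a))
  · refine ciSup_le fun vv => ciSup_le fun gg => ?_
    classical
    let q : Query k m := fun g =>
      if g = gg.1.1 then e0.trans (Equiv.swap (e0 a0) vv.1)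
      else if g = gg.1.2 then e0.trans (Equiv.swap (e0 a0) vv.2)
      else e0
    have h1 : q gg.1.1 a0 = vv.1 := by
      simp [q, Equiv.swap_apply_left]
    have h2 : q gg.1.2 a0 = vv.2 := by
      simp [q, Ne.symm gg.2, Equiv.swap_apply_left]
    have hstart : S vv gg = T q a0 gg := by
      rw [hTS, h1, h2]
    calc S vv gg = T q a0 gg := hstart
      _ ≤ ⨆ gg', T q a0 gg' :=
          le_ciSup (Set.Finite.bddAbove (Set.finite_range _)) gg
      _ ≤ ⨆ a, ⨆ gg', T q a gg' :=
          le_ciSup (f := fun a => ⨆ gg', T q a gg')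
            (Set.Finite.bddAbove (Set.finite_range _)) a0
      _ ≤ _ := le_ciSup (f := fun q' => ⨆ a, ⨆ gg', T q' a gg')
            (Set.Finite.bddAbove (Set.finite_range _)) q
end
end

section
/- Let ε > 0, let m be a positive integer, and let λ ∈ [0, 1 − 1/(2m)) satisfy λ ≥ (2m−1)/(2m + e^ε − 1). Then for all x, y ∈ [0,1], (2m(1−λ)−1)·x + λ ≤ e^ε·((2m(1−λ)−1)·y + λ). Consequently, for any value distributions p_g the Q&A privacy level max_{g≠g', v,v'∈V} ((2m(1−λ)−1)p_g(v)+λ)/((2m(1−λ)−1)p_{g'}(v')+λ) is at most e^ε, i.e., the Q&A scheme with this λ is ε-locally differentially private regardless of the users' value distributions. (Remark 1, equation (9).) -/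
open scoped BigOperators

noncomputable section

/- With `a = 2m(1-λ) - 1 > 0`, the affine map `x ↦ a x + λ` is increasing on `[0,1]`, so the worst
ratio is `(a + λ)/λ`; the lower bound on `λ` is exactly the condition `a + λ ≤ e^ε λ`. -/

lemma affine_le_mul_affine {a lam c x y : ℝ} (ha : 0 ≤ a) (hc : 0 ≤ c)
    (hkey : a + lam ≤ c * lam) (hx : x ≤ 1) (hy : 0 ≤ y) :
    a * x + lam ≤ c * (a * y + lam) :=
  calc a * x + lam ≤ a + lam := by gcongr; exact mul_le_of_le_one_right ha hx
    _ ≤ c * lam := hkey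
    _ ≤ c * (a * y + lam) := by gcongr; exact le_add_of_nonneg_left (mul_nonneg ha hy)

lemma affine_div_affine_le {a lam c x y : ℝ} (ha : 0 ≤ a) (hlam : 0 < lam)
    (hkey : a + lam ≤ c * lam) (hx : x ≤ 1) (hy : 0 ≤ y) :
    (a * x + lam) / (a * y + lam) ≤ c := by
  have hc : 0 ≤ c := by nlinarith
  rw [div_le_iff₀ (by positivity)]
  exact affine_le_mul_affine ha hc hkey hx hy

lemma mul_one_sub_sub_one_pos {n lam : ℝ} (hn : 0 < n) (h : lam < 1 - 1 / n) :
    0 < n * (1 - lam) - 1 := by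
  have : 1 / n < 1 - lam := by linarith
  rw [div_lt_iff₀ hn] at this
  linarith

lemma pos_of_sub_one_div_le {n c lam : ℝ} (hn : 1 < n) (hc : 0 < c)
    (h : (n - 1) / (n + c - 1) ≤ lam) : 0 < lam :=
  (div_pos (by linarith) (by linarith)).trans_le h

lemma mul_one_sub_sub_one_add_le {n c lam : ℝ} (hd : 0 < n + c - 1)
    (h : (n - 1) / (n + c - 1) ≤ lam) : n * (1 - lam) - 1 + lam ≤ c * lam := by
  rw [div_le_iff₀ hd] at h
  linarith

theorem stmt2_general (m k : ℕ) (hm : 0 < m)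
    (ε : ℝ)
    (lam : ℝ) (hlam1 : lam < 1 - 1/(2*m))
    (hlam2 : (2*m - 1)/(2*m + Real.exp ε - 1) ≤ lam) :
    (∀ x ∈ Set.Icc (0:ℝ) 1, ∀ y ∈ Set.Icc (0:ℝ) 1,
        (2*m*(1-lam) - 1) * x + lam
          ≤ Real.exp ε * ((2*m*(1-lam) - 1) * y + lam))
    ∧ ∀ p : Fin k → Vt m → ℝ, (∀ g v, p g v ∈ Set.Icc (0:ℝ) 1) →
        (⨆ vv : Vt m × Vt m, ⨆ gg : {x : Fin k × Fin k // x.1 ≠ x.2},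
            ((2*m*(1-lam) - 1) * p gg.1.1 vv.1 + lam) /
            ((2*m*(1-lam) - 1) * p gg.1.2 vv.2 + lam)) ≤ Real.exp ε := by
  have h2m : (1 : ℝ) < 2 * m := by
    have : (1 : ℝ) ≤ m := by exact_mod_cast hm
    linarith
  have hexp := Real.exp_pos ε
  have ha := (mul_one_sub_sub_one_pos (by linarith) hlam1).le
  have hlam := pos_of_sub_one_div_le h2m hexp hlam2
  have hkey := mul_one_sub_sub_one_add_le (by linarith) hlam2
  refine ⟨fun x hx y hy ↦ affine_le_mul_affine ha hexp.le hkey hx.2 hy.1, fun p hp ↦ ?_⟩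
  -- `Real.iSup_le` also covers empty index types, where `⨆` is `0`.
  refine Real.iSup_le (fun vv ↦ Real.iSup_le (fun gg ↦ ?_) hexp.le) hexp.le
  exact affine_div_affine_le ha hlam hkey (hp _ _).2 (hp _ _).1

/-- If `λ ∈ [0, 1 − 1/(2m))` satisfies
`λ ≥ (2m−1)/(2m + e^ε − 1)`, then for all `x, y ∈ [0,1]`,
`(2m(1−λ)−1)x + λ ≤ e^ε·((2m(1−λ)−1)y + λ)`; consequently, for any value
distributions `p_g` (with values in `[0,1]`) the Q&A privacy level
`max_{g≠g', v,v'} ((2m(1−λ)−1)p_g(v)+λ)/((2m(1−λ)−1)p_{g'}(v')+λ)` is at most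
`e^ε`, i.e. the Q&A scheme with this `λ` is `ε`-LDP regardless of the users'
value distributions. -/
theorem stmt2 (m k : ℕ) (hm : 0 < m) (hk : 2 ≤ k)
    (ε : ℝ) (hε : 0 < ε)
    (lam : ℝ) (hlam0 : 0 ≤ lam) (hlam1 : lam < 1 - 1/(2*m))
    (hlam2 : (2*m - 1)/(2*m + Real.exp ε - 1) ≤ lam) :
    (∀ x ∈ Set.Icc (0:ℝ) 1, ∀ y ∈ Set.Icc (0:ℝ) 1,
        (2*m*(1-lam) - 1) * x + lam
          ≤ Real.exp ε * ((2*m*(1-lam) - 1) * y + lam))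
    ∧ ∀ p : Fin k → Vt m → ℝ, (∀ g v, p g v ∈ Set.Icc (0:ℝ) 1) →
        (⨆ vv : Vt m × Vt m, ⨆ gg : {x : Fin k × Fin k // x.1 ≠ x.2},
            ((2*m*(1-lam) - 1) * p gg.1.1 vv.1 + lam) /
            ((2*m*(1-lam) - 1) * p gg.1.2 vv.2 + lam)) ≤ Real.exp ε :=
  stmt2_general m k hm ε lam hlam1 hlam2
end
end

section
/- The privacy level of the RG scheme satisfies: the maximum over answers (h, v) ∈ {1,…,k} × V and groups g ≠ g' of the likelihood ratio Pr((G̊, V̊) = (h, v) | G = g) / Pr((G̊, V̊) = (h, v) | G = g') equals max{ β₁·(p_max·β₂ + λ_vl), 1/(β₁·(p_min·β₂ + λ_vl)) }, where p_max = max_{g,v} p_g(v), p_min = min_{g,v} p_g(v), β₁ = 2m(k−1)(1−λ_gr)/((2m−1)·λ_gr), and β₂ = 2m(1−λ_vl) − 1. (Theorem 2, part 2.) -/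
open scoped BigOperators

noncomputable section

/-- The RG randomization channel: probability that a user with true group `g`
and true value `v` outputs the pair `(h, w)`. With probability `1 − λ_gr` he
keeps his group (`h = g`) and reports `w = RR_{λ_vl}(v)`; with probability
`λ_gr/(k−1)` he reports each other group, together with a uniform value. -/
def RGch (k m : ℕ) (lgr lvl : ℝ) (g : Fin k) (v : Vt m)
    (h : Fin k) (w : Vt m) : ℝ :=
  if h = g then (1 - lgr) * RR m lvl v w else (lgr / ((k : ℝ) - 1)) * (1 / (2*m))
/-- The privacy level of the RG scheme: the maximum over
answers `(h, v)` and pairs of distinct groups `g ≠ g'` of the likelihood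
ratio `Pr((G̊,V̊) = (h,v) | G = g) / Pr((G̊,V̊) = (h,v) | G = g')` equals
`max{β₁(p_max·β₂ + λ_vl), 1/(β₁(p_min·β₂ + λ_vl))}`, where
`p_max = max_{g,v} p_g(v)`, `p_min = min_{g,v} p_g(v)`,
`β₁ = 2m(k−1)(1−λ_gr)/((2m−1)λ_gr)` and `β₂ = 2m(1−λ_vl) − 1`. -/
theorem stmt10 (m k : ℕ) (hm : 0 < m) (hk : 2 ≤ k)
    (p : Fin k → Vt m → ℝ)
    (hpsum : ∀ g, ∑ v : Vt m, p g v = 1)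
    (hp : ∀ g v, 0 < p g v ∧ p g v < 1)
    (lgr lvl : ℝ) (hlgr : lgr ∈ Set.Ioo (0:ℝ) 1)
    (hlvl : lvl ∈ Set.Ico (0:ℝ) (1 - 1/(2*m))) :
    (⨆ hv : Fin k × Vt m, ⨆ gg : {x : Fin k × Fin k // x.1 ≠ x.2},
        (∑ v0 : Vt m, p gg.1.1 v0 * RGch k m lgr lvl gg.1.1 v0 hv.1 hv.2) /
        (∑ v0 : Vt m, p gg.1.2 v0 * RGch k m lgr lvl gg.1.2 v0 hv.1 hv.2))
    = max
        ((2*m*((k:ℝ) - 1)*(1 - lgr) / ((2*m - 1)*lgr)) *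
          ((⨆ g, ⨆ v, p g v) * (2*m*(1 - lvl) - 1) + lvl))
        (1 / ((2*m*((k:ℝ) - 1)*(1 - lgr) / ((2*m - 1)*lgr)) *
          ((⨅ g, ⨅ v, p g v) * (2*m*(1 - lvl) - 1) + lvl))) := by
  obtain ⟨hlgr0, hlgr1⟩ := hlgr
  obtain ⟨hlvl0, hlvl1⟩ := hlvl
  have hM : (1:ℝ) ≤ (m:ℝ) := by exact_mod_cast hm
  have h2m : (0:ℝ) < 2*(m:ℝ) - 1 := by linarith
  have h2m0 : (0:ℝ) < 2*(m:ℝ) := by linarith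
  have hk1 : (0:ℝ) < (k:ℝ) - 1 := by
    have : (2:ℝ) ≤ (k:ℝ) := by exact_mod_cast hk
    linarith
  have h1lgr : (0:ℝ) < 1 - lgr := by linarith
  set B1 : ℝ := 2*(m:ℝ)*((k:ℝ) - 1)*(1 - lgr) / ((2*(m:ℝ) - 1)*lgr) with hB1
  set B2 : ℝ := 2*(m:ℝ)*(1 - lvl) - 1 with hB2
  have hB2pos : 0 < B2 := by
    rw [hB2]
    have h1 : 1/(2*(m:ℝ)) < 1 - lvl := by linarith
    nlinarith [(div_lt_iff₀ h2m0).mp h1]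
  have hB1pos : 0 < B1 := by
    rw [hB1]; apply div_pos <;> positivity
  have hX : ∀ (g : Fin k) (w : Vt m), 0 < p g w * B2 + lvl := by
    intro g w
    have := (hp g w).1
    nlinarith
  have hsum : ∀ (g h : Fin k) (w : Vt m),
      (∑ v0 : Vt m, p g v0 * RGch k m lgr lvl g v0 h w)
      = if h = g then (1 - lgr) * ((p g w * B2 + lvl)/(2*(m:ℝ) - 1))
        else lgr / (((k:ℝ) - 1) * (2*(m:ℝ))) := by
    intro g h w
    by_cases hgh : h = g
    · simp only [RGch, if_pos hgh, RR]
      have step : ∀ v0 : Vt m,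
          p g v0 * ((1 - lgr) * (if w = v0 then 1 - lvl else lvl/(2*(m:ℝ) - 1)))
          = (if w = v0 then p g v0 * ((1-lgr)*(1-lvl) - (1-lgr)*(lvl/(2*(m:ℝ)-1))) else 0)
            + p g v0 * ((1-lgr)*(lvl/(2*(m:ℝ)-1))) := by
        intro v0; split <;> ring
      rw [Finset.sum_congr rfl (fun v0 _ => step v0), Finset.sum_add_distrib,
        Finset.sum_ite_eq, ← Finset.sum_mul, hpsum g]
      simp only [Finset.mem_univ, if_true, one_mul, hB2]
      field_simp
      ring
    · simp only [RGch, if_neg hgh, ← Finset.sum_mul, hpsum g, one_mul]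
      push_cast
      rw [div_mul_div_comm, mul_one]
  have hYpos : 0 < lgr / (((k:ℝ) - 1) * (2*(m:ℝ))) := by positivity
  have hXpos : ∀ (g : Fin k) (w : Vt m),
      0 < (1 - lgr) * ((p g w * B2 + lvl)/(2*(m:ℝ) - 1)) := by
    intro g w
    have := hX g w
    positivity
  have hratio : ∀ (hv : Fin k × Vt m) (gg : {x : Fin k × Fin k // x.1 ≠ x.2}),
      (∑ v0 : Vt m, p gg.1.1 v0 * RGch k m lgr lvl gg.1.1 v0 hv.1 hv.2) /
      (∑ v0 : Vt m, p gg.1.2 v0 * RGch k m lgr lvl gg.1.2 v0 hv.1 hv.2)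
      = if hv.1 = gg.1.1 then B1 * (p gg.1.1 hv.2 * B2 + lvl)
        else if hv.1 = gg.1.2 then 1 / (B1 * (p gg.1.2 hv.2 * B2 + lvl))
        else 1 := by
    have hc1 : ∀ (a : Fin k) (w : Vt m),
        ((1 - lgr) * ((p a w * B2 + lvl)/(2*(m:ℝ) - 1))) / (lgr / (((k:ℝ) - 1) * (2*(m:ℝ))))
        = B1 * (p a w * B2 + lvl) := by
      intro a w
      rw [hB1]
      field_simp
    rintro ⟨h, w⟩ ⟨⟨g, g'⟩, hgg⟩
    simp only [hsum]
    by_cases h1 : h = g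
    · have h2 : ¬ (h = g') := fun hh => hgg (h1 ▸ hh ▸ rfl)
      simp only [if_pos h1, if_neg h2]
      exact hc1 g w
    · by_cases h2 : h = g'
      · simp only [if_neg h1, if_pos h2]
        rw [← hc1 g' w, one_div_div]
      · simp only [if_neg h1, if_neg h2]
        exact div_self (ne_of_gt hYpos)
  -- nonempties
  haveI hVne : Nonempty (Vt m) := by
    refine ⟨⟨1, ?_⟩⟩
    simp only [Vset, Finset.mem_erase, Finset.mem_Icc]
    omega
  haveI hKne : Nonempty (Fin k) := ⟨⟨0, by omega⟩⟩
  have hg01 : (⟨0, by omega⟩ : Fin k) ≠ ⟨1, by omega⟩ := by simp [Fin.ext_iff]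
  haveI hPne : Nonempty {x : Fin k × Fin k // x.1 ≠ x.2} :=
    ⟨⟨(⟨0, by omega⟩, ⟨1, by omega⟩), hg01⟩⟩
  have hdistinct : ∀ g : Fin k, ∃ g' : Fin k, g' ≠ g := by
    intro g
    exact Fintype.exists_ne_of_one_lt_card (by simp; omega) g
  -- extrema of p
  obtain ⟨⟨gM, vM⟩, hmax⟩ := Finite.exists_max (fun x : Fin k × Vt m => p x.1 x.2)
  obtain ⟨⟨gm, vm⟩, hmin⟩ := Finite.exists_min (fun x : Fin k × Vt m => p x.1 x.2)
  simp only at hmax hmin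
  have hpmax : (⨆ g, ⨆ v, p g v) = p gM vM := by
    apply le_antisymm
    · exact ciSup_le fun g => ciSup_le fun v => hmax (g, v)
    · exact le_trans (le_ciSup (Set.Finite.bddAbove (Set.finite_range _)) vM)
        (le_ciSup (Set.Finite.bddAbove (Set.finite_range (fun g => ⨆ v, p g v))) gM)
  have hpmin : (⨅ g, ⨅ v, p g v) = p gm vm := by
    apply le_antisymm
    · exact le_trans (ciInf_le (Set.Finite.bddBelow (Set.finite_range (fun g => ⨅ v, p g v))) gm)
        (ciInf_le (Set.Finite.bddBelow (Set.finite_range _)) vm)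
    · exact le_ciInf fun g => le_ciInf fun v => hmin (g, v)
  rw [hpmax, hpmin]
  set A : ℝ := B1 * (p gM vM * B2 + lvl) with hA
  set B : ℝ := B1 * (p gm vm * B2 + lvl) with hB
  have hBpos : 0 < B := by
    have := hX gm vm; rw [hB]; positivity
  have hBA : B ≤ A := by
    rw [hA, hB]
    refine mul_le_mul_of_nonneg_left ?_ hB1pos.le
    have h1 : p gm vm ≤ p gM vM := hmin (gM, vM)
    have := mul_le_mul_of_nonneg_right h1 hB2pos.le
    linarith
  have hone : 1 ≤ max A (1 / B) := by
    by_cases h1 : 1 ≤ A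
    · exact le_max_of_le_left h1
    · push_neg at h1
      exact le_max_of_le_right (one_le_one_div hBpos (by linarith))
  apply le_antisymm
  · apply ciSup_le
    intro hv
    apply ciSup_le
    intro gg
    rw [hratio hv gg]
    split_ifs with h1 h2
    · refine le_max_of_le_left ?_
      rw [hA]
      refine mul_le_mul_of_nonneg_left ?_ hB1pos.le
      have h3 := mul_le_mul_of_nonneg_right (hmax (gg.1.1, hv.2)) hB2pos.le
      linarith
    · refine le_max_of_le_right ?_
      apply one_div_le_one_div_of_le hBpos
      rw [hB]
      refine mul_le_mul_of_nonneg_left ?_ hB1pos.le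
      have h3 := mul_le_mul_of_nonneg_right (hmin (gg.1.2, hv.2)) hB2pos.le
      linarith
    · exact hone
  · have bdd1 : BddAbove (Set.range fun hv : Fin k × Vt m =>
        ⨆ gg : {x : Fin k × Fin k // x.1 ≠ x.2},
        (∑ v0 : Vt m, p gg.1.1 v0 * RGch k m lgr lvl gg.1.1 v0 hv.1 hv.2) /
        (∑ v0 : Vt m, p gg.1.2 v0 * RGch k m lgr lvl gg.1.2 v0 hv.1 hv.2)) :=
      Set.Finite.bddAbove (Set.finite_range _)
    apply max_le
    · obtain ⟨g', hg'⟩ := hdistinct gM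
      have hne1 : ((gM, g') : Fin k × Fin k).1 ≠ ((gM, g') : Fin k × Fin k).2 :=
        fun hh => hg' hh.symm
      refine le_trans ?_ (le_ciSup bdd1 (gM, vM))
      refine le_ciSup_of_le (Set.Finite.bddAbove (Set.finite_range _))
        (⟨(gM, g'), hne1⟩ : {x : Fin k × Fin k // x.1 ≠ x.2}) ?_
      rw [hratio (gM, vM) ⟨(gM, g'), hne1⟩]
      split_ifs with h1 h2
      · exact le_of_eq hA
      · exact absurd rfl h1
    · obtain ⟨g, hg⟩ := hdistinct gm
      have hne2 : ((g, gm) : Fin k × Fin k).1 ≠ ((g, gm) : Fin k × Fin k).2 := hg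
      refine le_trans ?_ (le_ciSup bdd1 (gm, vm))
      refine le_ciSup_of_le (Set.Finite.bddAbove (Set.finite_range _))
        (⟨(g, gm), hne2⟩ : {x : Fin k × Fin k // x.1 ≠ x.2}) ?_
      rw [hratio (gm, vm) ⟨(g, gm), hne2⟩]
      split_ifs with h1 h2
      · exact absurd h1.symm hg
      · exact le_of_eq (by rw [hB])
      · exact absurd rfl h2
end
end

section
/- Define X(j) := V·1{G = j} and Z(j) := V̊·1{G̊ = j} for each j ∈ {1,…,k}. Then for every j, E[X(j)·Z(j)] = ((2m(1−λ_vl) − 1)/(2m−1))·θ_j·(1 − λ_gr)·μ₂(j), where μ₂(j) = Σ_{v∈V} v²·p_j(v). -/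
open scoped BigOperators

noncomputable section

lemma sum_Icc_sym_zero (n : ℕ) : ∑ v ∈ Finset.Icc (-(n:ℤ)) (n:ℤ), v = 0 := by
  induction n with
  | zero => simp
  | succ n ih =>
    have h1 : (((n+1:ℕ)):ℤ) = (n:ℤ)+1 := by push_cast; ring
    have h2 : Finset.Icc (-((n:ℤ)+1)) ((n:ℤ)+1)
        = insert (-((n:ℤ)+1)) (insert ((n:ℤ)+1) (Finset.Icc (-(n:ℤ)) (n:ℤ))) := by
      ext x; simp [Finset.mem_Icc]; omega
    have h3 : -((n:ℤ)+1) ∉ insert ((n:ℤ)+1) (Finset.Icc (-(n:ℤ)) (n:ℤ)) := by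
      simp [Finset.mem_Icc]; omega
    have h4 : ((n:ℤ)+1) ∉ Finset.Icc (-(n:ℤ)) (n:ℤ) := by
      simp [Finset.mem_Icc]
    rw [h1, h2, Finset.sum_insert h3, Finset.sum_insert h4, ih]
    ring

lemma sum_Vt_zero (m : ℕ) : ∑ v : Vt m, ((v:ℤ):ℝ) = 0 := by
  have h : ∑ v ∈ Vset m, v = 0 := by
    unfold Vset
    rw [Finset.sum_erase _ (by simp)]
    exact sum_Icc_sym_zero m
  have h2 : ∑ v : Vt m, ((v:ℤ):ℝ) = ∑ v ∈ Vset m, ((v:ℝ)) :=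
    Finset.sum_finset_coe _ _
  rw [h2, ← Int.cast_sum, h, Int.cast_zero]

lemma RR_sum (m : ℕ) (hm : 0 < m) (lvl : ℝ) (v : Vt m) :
    ∑ w : Vt m, RR m lvl v w * ((w:ℤ):ℝ)
      = ((2*m*(1-lvl)-1)/(2*m-1)) * ((v:ℤ):ℝ) := by
  have hne : (2*(m:ℝ)-1) ≠ 0 := by
    have : (1:ℝ) ≤ m := by exact_mod_cast hm
    nlinarith
  have hterm : ∀ w : Vt m, RR m lvl v w * ((w:ℤ):ℝ)
      = lvl/(2*(m:ℝ)-1) * ((w:ℤ):ℝ)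
        + (if w = v then ((1-lvl) - lvl/(2*(m:ℝ)-1)) * ((w:ℤ):ℝ) else 0) := by
    intro w; unfold RR; split <;> ring
  have key : (1-lvl) - lvl/(2*(m:ℝ)-1) = (2*m*(1-lvl)-1)/(2*(m:ℝ)-1) := by
    field_simp; ring
  rw [Finset.sum_congr rfl (fun w _ => hterm w), Finset.sum_add_distrib,
    ← Finset.mul_sum, sum_Vt_zero, Fintype.sum_ite_eq' v
      (fun w => ((1-lvl) - lvl/(2*(m:ℝ)-1)) * ((w:ℤ):ℝ)), mul_zero, zero_add, key]

/-- With `X(j) := V·1{G = j}` and `Z(j) := V̊·1{G̊ = j}`, for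
every `j`, `E[X(j)·Z(j)] = ((2m(1−λ_vl)−1)/(2m−1))·θ_j·(1−λ_gr)·μ₂(j)`,
where `μ₂(j) = Σ_{v∈V} v²·p_j(v)`. The expectation is over the joint RG
model: `G ~ θ`, `V ~ p_G`, and `(G̊, V̊)` produced by the RG channel. -/
theorem stmt12 (m k : ℕ) (hm : 0 < m) (hk : 2 ≤ k)
    (p : Fin k → Vt m → ℝ)
    (hpsum : ∀ g, ∑ v : Vt m, p g v = 1)
    (hp : ∀ g v, 0 < p g v ∧ p g v < 1)
    (θ : Fin k → ℝ) (hθ0 : ∀ g, 0 ≤ θ g) (hθ1 : ∑ g, θ g = 1)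
    (lgr lvl : ℝ) (hlgr : lgr ∈ Set.Ioo (0:ℝ) 1)
    (hlvl : lvl ∈ Set.Ico (0:ℝ) (1 - 1/(2*m)))
    (j : Fin k) :
    (∑ g : Fin k, ∑ v : Vt m, ∑ h : Fin k, ∑ w : Vt m,
        θ g * p g v * RGch k m lgr lvl g v h w *
          ((if g = j then ((v : ℤ) : ℝ) else 0) *
            (if h = j then ((w : ℤ) : ℝ) else 0)))
      = ((2*m*(1 - lvl) - 1) / (2*m - 1)) * θ j * (1 - lgr) *
          (∑ v : Vt m, ((v : ℤ) : ℝ)^2 * p j v) := by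
  rw [Fintype.sum_eq_single j (fun g hg => by simp [hg])]
  have hin : ∀ v : Vt m,
      (∑ h : Fin k, ∑ w : Vt m,
        θ j * p j v * RGch k m lgr lvl j v h w *
          ((if j = j then ((v : ℤ) : ℝ) else 0) *
            (if h = j then ((w : ℤ) : ℝ) else 0)))
      = θ j * p j v * (1 - lgr) * (((2*m*(1-lvl)-1)/(2*(m:ℝ)-1)) * ((v:ℤ):ℝ)) * ((v:ℤ):ℝ) := by
    intro v
    rw [Fintype.sum_eq_single j (fun h hh => by simp [hh])]
    simp only [RGch, eq_self_iff_true, if_true]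
    rw [show (∑ w : Vt m, θ j * p j v * ((1 - lgr) * RR m lvl v w) *
          (((v:ℤ):ℝ) * ((w:ℤ):ℝ)))
        = (θ j * p j v * (1-lgr) * ((v:ℤ):ℝ)) *
            ∑ w : Vt m, RR m lvl v w * ((w:ℤ):ℝ) from by
      rw [Finset.mul_sum]; exact Finset.sum_congr rfl fun w _ => by ring,
      RR_sum m hm lvl v]
    ring
  rw [Finset.sum_congr rfl fun v _ => hin v, Finset.mul_sum]
  exact Finset.sum_congr rfl fun v _ => by ring
end
end

section
/- Suppose e^{2ε} < p_max/p_min and p_max ≠ 1/(2m). Let λ_vl* = (2m−1)·(p_max − e^{2ε}·p_min) / ((1 − 2m·p_min)·e^{2ε} + 2m·p_max − 1) and λ_gr* = 2m(k−1)(p_max − p_min)·e^ε / (2m(k−1)(p_max − p_min)·e^ε + (1 − 2m·p_min)·e^{2ε} + 2m·p_max − 1). Then (λ_gr*, λ_vl*) belongs to the feasible set F_ε and β₃(λ_gr*, λ_vl*) ≤ β₃(λ_gr, λ_vl) for every (λ_gr, λ_vl) ∈ F_ε; that is, these parameters guarantee privacy level ε and minimize the relative error of the RG scheme. (Corollary 1,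 first case.) -/
open scoped BigOperators

noncomputable section

/-- `β₁ = 2m(k−1)(1−λ_gr)/((2m−1)λ_gr)`. -/
def B1 (k m : ℕ) (lgr : ℝ) : ℝ := 2*m*((k : ℝ) - 1)*(1 - lgr) / ((2*m - 1)*lgr)

/-- `β₂ = 2m(1−λ_vl) − 1`. -/
def B2 (m : ℕ) (lvl : ℝ) : ℝ := 2*m*(1 - lvl) - 1

/-- The relative-error coefficient `β₃` of the RG scheme (its relative error
times `n`), with `c = E[V²]`. -/
def B3 (k m : ℕ) (c lgr lvl : ℝ) : ℝ :=
  c * ((2*m - 1) / ((1 - lgr) * B2 m lvl) - 1)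
    + (4*m^2 - 1) * (m + 1) * (2*m*lvl*(1 - lgr) + lgr*(2*m - 1))
        / (6 * (1 - lgr)^2 * (B2 m lvl)^2)

/-- The feasible set `F_ε`: pairs `(λ_gr, λ_vl)` of RG parameters whose
privacy level `max{β₁(p_max·β₂+λ_vl), 1/(β₁(p_min·β₂+λ_vl))}` equals `e^ε`. -/
def Feas (k m : ℕ) (pmax pmin ε : ℝ) : Set (ℝ × ℝ) :=
  {x | x.1 ∈ Set.Ioo (0:ℝ) 1 ∧ x.2 ∈ Set.Ico (0:ℝ) (1 - 1/(2*m)) ∧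
    max (B1 k m x.1 * (pmax * B2 m x.2 + x.2))
        (1 / (B1 k m x.1 * (pmin * B2 m x.2 + x.2))) = Real.exp ε}

private lemma B3aux' (M c t1 t2 : ℝ) (hM : 1 ≤ M) (hc : 0 ≤ c) (h1 : 0 < t1) (h12 : t1 ≤ t2)
    (h2 : t2 ≤ 2*M - 1) :
    c * ((2*M - 1)/t2 - 1) + (4*M^2 - 1)*(M+1)*((2*M-1) - t2)/(6*t2^2)
    ≤ c * ((2*M - 1)/t1 - 1) + (4*M^2 - 1)*(M+1)*((2*M-1) - t1)/(6*t1^2) := by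
  have h2' : 0 < t2 := lt_of_lt_of_le h1 h12
  have eL : c * ((2*M - 1)/t2 - 1) + (4*M^2 - 1)*(M+1)*((2*M-1) - t2)/(6*t2^2)
      = (6*c*((2*M-1)*t2 - t2^2) + (4*M^2-1)*(M+1)*((2*M-1) - t2))/(6*t2^2) := by
    field_simp
  have eR : c * ((2*M - 1)/t1 - 1) + (4*M^2 - 1)*(M+1)*((2*M-1) - t1)/(6*t1^2)
      = (6*c*((2*M-1)*t1 - t1^2) + (4*M^2-1)*(M+1)*((2*M-1) - t1))/(6*t1^2) := by
    field_simp
  rw [eL, eR, div_le_div_iff₀ (by positivity) (by positivity)]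
  have hN : 0 ≤ (4*M^2-1)*(M+1) := by nlinarith
  have hintA : 0 ≤ c * ((2*M-1) * (t1*t2) * (t2-t1)) := by
    have : 0 ≤ (2*M-1) * (t1*t2) * (t2-t1) := by
      have := mul_pos h1 h2'
      have h21 : (0:ℝ) ≤ 2*M-1 := by linarith
      exact mul_nonneg (mul_nonneg h21 this.le) (by linarith)
    exact mul_nonneg hc this
  have hbr : 0 ≤ (2*M-1)*(t1+t2) - t1*t2 := by nlinarith [mul_nonneg (sub_nonneg.2 h2) h1.le]
  have hintB : 0 ≤ (4*M^2-1)*(M+1) * ((t2-t1) * ((2*M-1)*(t1+t2) - t1*t2)) :=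
    mul_nonneg hN (mul_nonneg (by linarith) hbr)
  nlinarith [hintA, hintB]

private lemma B3_eq' (k m : ℕ) (c lgr lvl : ℝ) (h1 : (1:ℝ) - lgr ≠ 0) (hb : B2 m lvl ≠ 0) :
    B3 k m c lgr lvl = c * ((2*(m:ℝ) - 1)/((1-lgr)*B2 m lvl) - 1)
      + (4*(m:ℝ)^2 - 1)*((m:ℝ)+1)*((2*(m:ℝ)-1) - (1-lgr)*B2 m lvl)/(6*((1-lgr)*B2 m lvl)^2) := by
  simp only [B3, B2] at *
  field_simp
  ring

set_option maxHeartbeats 1000000 in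
/-- Corollary 1, first case: if `e^{2ε} < p_max/p_min` and
`p_max ≠ 1/(2m)`, then with
`λ_vl* = (2m−1)(p_max − e^{2ε}p_min)/((1−2m·p_min)e^{2ε} + 2m·p_max − 1)` and
`λ_gr* = 2m(k−1)(p_max−p_min)e^ε /
  (2m(k−1)(p_max−p_min)e^ε + (1−2m·p_min)e^{2ε} + 2m·p_max − 1)`,
the pair `(λ_gr*, λ_vl*)` is feasible (guarantees privacy level `ε`) and
minimizes the relative error `β₃` of the RG scheme over the feasible set. -/
theorem stmt15 (m k : ℕ) (hm : 0 < m) (hk : 2 ≤ k)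
    (p : Fin k → Vt m → ℝ)
    (hpsum : ∀ g, ∑ v : Vt m, p g v = 1)
    (hp : ∀ g v, 0 < p g v ∧ p g v < 1)
    (θ : Fin k → ℝ) (hθ0 : ∀ g, 0 ≤ θ g) (hθ1 : ∑ g, θ g = 1)
    (pmax pmin c : ℝ)
    (hpmax : pmax = ⨆ g, ⨆ v, p g v)
    (hpmin : pmin = ⨅ g, ⨅ v, p g v)
    (hc : c = ∑ g : Fin k, θ g * ∑ v : Vt m, ((v : ℤ) : ℝ)^2 * p g v)
    (ε : ℝ) (hε : 0 < ε)
    (hcase : Real.exp (2*ε) < pmax / pmin)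
    (hcase' : pmax ≠ 1/(2*m))
    (lvlstar lgrstar : ℝ)
    (hlvlstar : lvlstar = (2*m - 1) * (pmax - Real.exp (2*ε) * pmin)
        / ((1 - 2*m*pmin) * Real.exp (2*ε) + 2*m*pmax - 1))
    (hlgrstar : lgrstar = 2*m*((k:ℝ) - 1) * (pmax - pmin) * Real.exp ε
        / (2*m*((k:ℝ) - 1) * (pmax - pmin) * Real.exp ε
            + (1 - 2*m*pmin) * Real.exp (2*ε) + 2*m*pmax - 1)) :
    (lgrstar, lvlstar) ∈ Feas k m pmax pmin ε
    ∧ ∀ x ∈ Feas k m pmax pmin ε,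
        B3 k m c lgrstar lvlstar ≤ B3 k m c x.1 x.2 := by
  have hm1 : (1:ℝ) ≤ (m:ℝ) := by exact_mod_cast hm
  have h2m1 : (0:ℝ) < 2*(m:ℝ) - 1 := by linarith
  have hk2 : (2:ℝ) ≤ (k:ℝ) := by exact_mod_cast hk
  have hk1 : (1:ℝ) ≤ (k:ℝ) - 1 := by linarith
  have hE0 : 0 < Real.exp ε := Real.exp_pos ε
  have hE1 : 1 < Real.exp ε := by
    have := Real.exp_lt_exp.mpr hε; rwa [Real.exp_zero] at this
  have hE2 : Real.exp (2*ε) = Real.exp ε ^ 2 := by rw [two_mul, Real.exp_add, sq]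
  rw [hE2] at hcase hlvlstar hlgrstar
  have hEsq : 1 < Real.exp ε ^ 2 := by nlinarith [hE1, hE0]
  have hVne : Nonempty (Vt m) := ⟨⟨1, by simp [Vset, Finset.mem_erase, Finset.mem_Icc]; omega⟩⟩
  have hkne : Nonempty (Fin k) := ⟨⟨0, by omega⟩⟩
  have hple : ∀ g v, p g v ≤ pmax := by
    intro g v; rw [hpmax]
    exact le_trans (le_ciSup (Finite.bddAbove_range _) v)
      (le_ciSup (Finite.bddAbove_range fun g => ⨆ v, p g v) g)
  have hpge : ∀ g v, pmin ≤ p g v := by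
    intro g v; rw [hpmin]
    exact le_trans (ciInf_le (Finite.bddBelow_range fun g => ⨅ v, p g v) g)
      (ciInf_le (Finite.bddBelow_range _) v)
  have hpminpos : 0 < pmin := by
    obtain ⟨⟨g0, v0⟩, hmin⟩ := Finite.exists_min (fun gv : Fin k × Vt m => p gv.1 gv.2)
    rw [hpmin]
    exact lt_of_lt_of_le (hp g0 v0).1 (le_ciInf fun g => le_ciInf fun v => hmin (g, v))
  have hcard : Fintype.card (Vt m) = 2*m := by
    have h0 : (0:ℤ) ∈ Finset.Icc (-(m:ℤ)) m := by simp [Finset.mem_Icc]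
    rw [Fintype.card_coe, Vset, Finset.card_erase_of_mem h0, Int.card_Icc]
    omega
  have hsum_ub : (1:ℝ) ≤ 2*(m:ℝ)*pmax := by
    obtain ⟨g⟩ := hkne
    calc (1:ℝ) = ∑ v : Vt m, p g v := (hpsum g).symm
      _ ≤ Finset.univ.card • pmax := Finset.sum_le_card_nsmul _ _ _ (fun v _ => hple g v)
      _ = 2*(m:ℝ)*pmax := by
          rw [Finset.card_univ, hcard, nsmul_eq_mul]; push_cast; ring
  have hsum_lb : 2*(m:ℝ)*pmin ≤ 1 := by
    obtain ⟨g⟩ := hkne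
    calc 2*(m:ℝ)*pmin = Finset.univ.card • pmin := by
          rw [Finset.card_univ, hcard, nsmul_eq_mul]; push_cast; ring
      _ ≤ ∑ v : Vt m, p g v := Finset.card_nsmul_le_sum _ _ _ (fun v _ => hpge g v)
      _ = 1 := hpsum g
  have hpmaxgt : 1 < 2*(m:ℝ)*pmax := by
    rcases lt_or_eq_of_le hsum_ub with h | h
    · exact h
    · exact absurd (by rw [eq_div_iff (by positivity : (2*(m:ℝ)) ≠ 0)]; linarith) hcase'
  have hgap : Real.exp ε ^ 2 * pmin < pmax := (lt_div_iff₀ hpminpos).1 hcase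
  have hpp : 0 < pmax - pmin := by
    nlinarith [mul_pos hpminpos (show (0:ℝ) < Real.exp ε ^ 2 - 1 by nlinarith [hE1, hE0])]
  have hc0 : 0 ≤ c := by
    rw [hc]
    exact Finset.sum_nonneg fun g _ => mul_nonneg (hθ0 g)
      (Finset.sum_nonneg fun v _ => mul_nonneg (sq_nonneg _) (hp g v).1.le)
  obtain ⟨D, hDdef⟩ : ∃ x:ℝ, x = (1 - 2*(m:ℝ)*pmin) * Real.exp ε ^ 2 + 2*(m:ℝ)*pmax - 1 :=
    ⟨_, rfl⟩
  obtain ⟨A, hAdef⟩ : ∃ x:ℝ, x = 2*(m:ℝ)*((k:ℝ) - 1) * (pmax - pmin) * Real.exp ε := ⟨_, rfl⟩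
  have hD : 0 < D := by
    rw [hDdef]
    have h1 : (0:ℝ) ≤ (1 - 2*(m:ℝ)*pmin) * Real.exp ε ^ 2 :=
      mul_nonneg (by linarith) (sq_nonneg _)
    linarith
  have hA : 0 < A := by
    rw [hAdef]
    have h1 : (0:ℝ) < 2*(m:ℝ)*((k:ℝ)-1) := mul_pos (by linarith) (by linarith)
    exact mul_pos (mul_pos h1 hpp) hE0
  have hAD : 0 < A + D := by linarith
  have hgap2 : 0 < pmax - Real.exp ε ^ 2 * pmin := by linarith
  have hlv : lvlstar = (2*(m:ℝ) - 1) * (pmax - Real.exp ε ^ 2 * pmin) / D := by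
    rw [hlvlstar, hDdef]
  have hlgr : lgrstar = A / (A + D) := by
    rw [hlgrstar, hAdef, hDdef]; ring
  have hlvD : lvlstar * D = (2*(m:ℝ) - 1) * (pmax - Real.exp ε ^ 2 * pmin) := by
    rw [hlv, div_mul_cancel₀ _ hD.ne']
  have hbstar : B2 m lvlstar = (2*(m:ℝ)-1)*(Real.exp ε^2 - 1)/D := by
    rw [eq_div_iff hD.ne', B2]
    linear_combination (-(2*(m:ℝ)))*hlvD + (2*(m:ℝ)-1)*hDdef
  have hbprod : B2 m lvlstar * D = (2*(m:ℝ)-1)*(Real.exp ε^2 - 1) := by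
    rw [hbstar, div_mul_cancel₀ _ hD.ne']
  have hbstarpos : 0 < B2 m lvlstar := by
    rw [hbstar]; exact div_pos (mul_pos h2m1 (by linarith)) hD
  have e1 : lgrstar * (A + D) = A := by rw [hlgr, div_mul_cancel₀ _ hAD.ne']
  have e2 : (1 - lgrstar) * (A + D) = D := by linear_combination -e1
  have hlgrIoo : lgrstar ∈ Set.Ioo (0:ℝ) 1 := by
    constructor
    · rw [hlgr]; exact div_pos hA hAD
    · rw [hlgr]; exact (div_lt_one hAD).2 (by linarith)
  have hlvlIco : lvlstar ∈ Set.Ico (0:ℝ) (1 - 1/(2*(m:ℝ))) := by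
    constructor
    · rw [hlv]
      exact div_nonneg (mul_nonneg (by linarith) hgap2.le) hD.le
    · have h2mid : 2*(m:ℝ)*(1/(2*(m:ℝ))) = 1 := by field_simp
      have key : ((1:ℝ) - 1/(2*(m:ℝ)) - lvlstar) * (2*(m:ℝ)*D) = (2*(m:ℝ)-1)*(Real.exp ε^2-1) := by
        linear_combination (-D)*h2mid + (-(2*(m:ℝ)))*hlvD + (2*(m:ℝ)-1)*hDdef
      have h5 : 0 < ((1:ℝ) - 1/(2*(m:ℝ)) - lvlstar) * (2*(m:ℝ)*D) := by
        rw [key]; exact mul_pos h2m1 (by linarith)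
      rcases mul_pos_iff.1 h5 with ⟨h7, _⟩ | ⟨_, h8⟩
      · linarith
      · exfalso; have : 0 < 2*(m:ℝ)*D := mul_pos (by linarith) hD; linarith
  have hWne : ((2*(m:ℝ)-1)*(pmax-pmin)*Real.exp ε) ≠ 0 :=
    (mul_pos (mul_pos h2m1 hpp) hE0).ne'
  have hB1prod : B1 k m lgrstar * ((2*(m:ℝ)-1)*(pmax-pmin)*Real.exp ε) = D := by
    rw [B1, div_mul_eq_mul_div, div_eq_iff (mul_ne_zero h2m1.ne' hlgrIoo.1.ne')]
    linear_combination (-(2*(m:ℝ)-1))*e1 - (2*(m:ℝ)-1)*(1-lgrstar)*hAdef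
  have hB1s : B1 k m lgrstar = D / ((2*(m:ℝ)-1)*(pmax-pmin)*Real.exp ε) := by
    rw [eq_div_iff hWne]; exact hB1prod
  have hB1spos : 0 < B1 k m lgrstar := by
    rw [hB1s]; exact div_pos hD (mul_pos (mul_pos h2m1 hpp) hE0)
  have hPsum : (pmax * B2 m lvlstar + lvlstar) * D = (2*(m:ℝ)-1)*Real.exp ε^2*(pmax-pmin) := by
    linear_combination pmax*hbprod + hlvD
  have hQsum : (pmin * B2 m lvlstar + lvlstar) * D = (2*(m:ℝ)-1)*(pmax-pmin) := by
    linear_combination pmin*hbprod + hlvD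
  have hPe : B1 k m lgrstar * (pmax * B2 m lvlstar + lvlstar) = Real.exp ε := by
    rw [hB1s, div_mul_eq_mul_div, div_eq_iff hWne]
    linear_combination hPsum
  have hQpos' : 0 < pmin * B2 m lvlstar + lvlstar :=
    add_pos_of_pos_of_nonneg (mul_pos hpminpos hbstarpos) hlvlIco.1
  have hxne : B1 k m lgrstar * (pmin * B2 m lvlstar + lvlstar) ≠ 0 :=
    (mul_pos hB1spos hQpos').ne'
  have hQe1 : B1 k m lgrstar * (pmin * B2 m lvlstar + lvlstar) * Real.exp ε = 1 := by
    rw [hB1s, div_mul_eq_mul_div, div_mul_eq_mul_div, div_eq_iff hWne]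
    linear_combination Real.exp ε * hQsum
  have hQe : 1 / (B1 k m lgrstar * (pmin * B2 m lvlstar + lvlstar)) = Real.exp ε := by
    rw [div_eq_iff hxne]
    linear_combination -hQe1
  have hmaxeq : max (B1 k m lgrstar * (pmax * B2 m lvlstar + lvlstar))
      (1 / (B1 k m lgrstar * (pmin * B2 m lvlstar + lvlstar))) = Real.exp ε := by
    rw [hPe, hQe, max_self]
  -- the star parameters and the value (1-lgrstar)*B2 m lvlstar
  have htstarAD : (1-lgrstar)*B2 m lvlstar*(A+D) = (2*(m:ℝ)-1)*(Real.exp ε^2-1) := by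
    linear_combination B2 m lvlstar * e2 + hbprod
  have htstarpos : 0 < (1-lgrstar)*B2 m lvlstar :=
    mul_pos (by linarith [hlgrIoo.2]) hbstarpos
  have hDge : Real.exp ε^2 - 1 ≤ D := by
    rw [hDdef]; linarith [mul_nonneg (by linarith : (0:ℝ) ≤ 2*(m:ℝ)) hgap2.le]
  have htstarle : (1-lgrstar)*B2 m lvlstar ≤ 2*(m:ℝ) - 1 := by
    have h1 : (1-lgrstar)*B2 m lvlstar*(A+D) ≤ (2*(m:ℝ)-1)*(A+D) := by
      rw [htstarAD]
      have := mul_nonneg h2m1.le (show (0:ℝ) ≤ A + D - (Real.exp ε^2 - 1) by linarith [hDge, hA])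
      linarith
    exact le_of_mul_le_mul_right h1 hAD
  refine ⟨?_, ?_⟩
  · simp only [Feas, Set.mem_setOf_eq]
    exact ⟨hlgrIoo, hlvlIco, hmaxeq⟩
  · rintro ⟨lgr, lvl⟩ hx
    simp only [Feas, Set.mem_setOf_eq] at hx
    obtain ⟨hx1, hx2, hx3⟩ := hx
    show B3 k m c lgrstar lvlstar ≤ B3 k m c lgr lvl
    have ha : 0 < 1 - lgr := by linarith only [hx1.2]
    have h2mid : 2*(m:ℝ)*(1/(2*(m:ℝ))) = 1 := by field_simp
    have hb0 : 0 < B2 m lvl := by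
      rw [B2]
      have h1 := mul_pos (by linarith only [hm1] : (0:ℝ) < 2*(m:ℝ)) (sub_pos.2 hx2.2)
      have h2 : 2*(m:ℝ)*(1 - 1/(2*(m:ℝ))) = 2*(m:ℝ) - 1 := by field_simp
      linarith only [h1, h2]
    have hble2m : B2 m lvl ≤ 2*(m:ℝ) - 1 := by
      rw [B2]
      have h1 := mul_nonneg (by linarith only [hm1] : (0:ℝ) ≤ 2*(m:ℝ)) hx2.1
      linarith only [h1]
    have hB1pos : 0 < B1 k m lgr := by
      rw [B1]
      exact div_pos (mul_pos (mul_pos (by linarith only [hm1]) (by linarith only [hk1]))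
        (by linarith only [hx1.2])) (mul_pos h2m1 hx1.1)
    have hQpos : 0 < pmin * B2 m lvl + lvl :=
      add_pos_of_pos_of_nonneg (mul_pos hpminpos hb0) hx2.1
    have hPposx : 0 < pmax * B2 m lvl + lvl :=
      add_pos_of_pos_of_nonneg (mul_pos (by linarith [hpge ⟨0, by omega⟩ ⟨1, by
        simp [Vset, Finset.mem_erase, Finset.mem_Icc]; omega⟩] : (0:ℝ) < pmax) hb0) hx2.1
    have hmax1 : B1 k m lgr * (pmax * B2 m lvl + lvl) ≤ Real.exp ε :=
      (le_max_left _ _).trans_eq hx3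
    have hmax2 : 1 / (B1 k m lgr * (pmin * B2 m lvl + lvl)) ≤ Real.exp ε :=
      (le_max_right _ _).trans_eq hx3
    have hprod : 0 < B1 k m lgr * (pmin * B2 m lvl + lvl) := mul_pos hB1pos hQpos
    have h2 : 1 ≤ Real.exp ε * (B1 k m lgr * (pmin * B2 m lvl + lvl)) :=
      (div_le_iff₀ hprod).1 hmax2
    have hcomb : pmax * B2 m lvl + lvl ≤ Real.exp ε^2 * (pmin * B2 m lvl + lvl) := by
      linarith only [mul_le_mul_of_nonneg_left hmax1 (mul_pos hE0 hQpos).le,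
        mul_le_mul_of_nonneg_left h2 hPposx.le]
    have hlvl2 : 2*(m:ℝ)*lvl = 2*(m:ℝ) - 1 - B2 m lvl := by rw [B2]; ring
    have hz : Real.exp ε^2 * (2*(m:ℝ)*lvl) = Real.exp ε^2 * (2*(m:ℝ) - 1 - B2 m lvl) := by
      rw [hlvl2]
    have hc2 := mul_le_mul_of_nonneg_left hcomb (by positivity : (0:ℝ) ≤ 2*(m:ℝ))
    have hbD : B2 m lvl * D ≤ (2*(m:ℝ)-1)*(Real.exp ε^2 - 1) := by
      rw [hDdef]; linarith only [hc2, hz, hlvl2]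
    have hbleb : B2 m lvl ≤ B2 m lvlstar := by
      have h1 : B2 m lvl * D ≤ B2 m lvlstar * D := by rw [hbprod]; exact hbD
      exact le_of_mul_le_mul_right h1 hD
    -- group-parameter constraint
    have hA1 : 2*(m:ℝ)*((k:ℝ)-1)*(1-lgr)*(pmax * B2 m lvl + lvl)
        ≤ Real.exp ε * ((2*(m:ℝ)-1)*lgr) := by
      rw [B1, div_mul_eq_mul_div, div_le_iff₀ (mul_pos h2m1 hx1.1)] at hmax1
      exact hmax1
    have hz2 : (1-lgr)*((k:ℝ)-1)*(2*(m:ℝ)*lvl)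
        = (1-lgr)*((k:ℝ)-1)*(2*(m:ℝ) - 1 - B2 m lvl) := by rw [hlvl2]
    have ha2 : (1-lgr)*(((k:ℝ)-1)*((2*(m:ℝ)*pmax-1)*B2 m lvl + (2*(m:ℝ)-1))
        + Real.exp ε*(2*(m:ℝ)-1)) ≤ Real.exp ε*(2*(m:ℝ)-1) := by
      linarith only [hA1, hz2]
    have hXpos : 0 < (2*(m:ℝ)*pmax-1)*B2 m lvl + (2*(m:ℝ)-1) := by
      linarith only [mul_pos (sub_pos.2 hpmaxgt) hb0, h2m1]
    have hW : 0 < ((k:ℝ)-1)*((2*(m:ℝ)*pmax-1)*B2 m lvl + (2*(m:ℝ)-1))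
        + Real.exp ε*(2*(m:ℝ)-1) := by
      linarith only [mul_pos (by linarith only [hk1] : (0:ℝ) < (k:ℝ)-1) hXpos, mul_pos hE0 h2m1]
    have hXspos : 0 < (2*(m:ℝ)*pmax-1)*B2 m lvlstar + (2*(m:ℝ)-1) := by
      linarith only [mul_pos (sub_pos.2 hpmaxgt) hbstarpos, h2m1]
    have hWs : 0 < ((k:ℝ)-1)*((2*(m:ℝ)*pmax-1)*B2 m lvlstar + (2*(m:ℝ)-1))
        + Real.exp ε*(2*(m:ℝ)-1) := by
      linarith only [mul_pos (by linarith only [hk1] : (0:ℝ) < (k:ℝ)-1) hXspos, mul_pos hE0 h2m1]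
    -- the star point satisfies the group constraint with equality
    have htsW : (1-lgrstar)*B2 m lvlstar*(((k:ℝ)-1)*((2*(m:ℝ)*pmax-1)*B2 m lvlstar
        + (2*(m:ℝ)-1)) + Real.exp ε*(2*(m:ℝ)-1))
        = Real.exp ε*(2*(m:ℝ)-1)*B2 m lvlstar := by
      have hEA : Real.exp ε * A
          = ((k:ℝ)-1)*((2*(m:ℝ)*pmax-1)*(Real.exp ε^2-1) + D) := by
        rw [hAdef, hDdef]; ring
      have hG : (1-lgrstar)*B2 m lvlstar*(((k:ℝ)-1)*((2*(m:ℝ)*pmax-1)*B2 m lvlstar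
          + (2*(m:ℝ)-1)) + Real.exp ε*(2*(m:ℝ)-1))*(A+D)
          = Real.exp ε*(2*(m:ℝ)-1)*B2 m lvlstar*(A+D) := by
        linear_combination (B2 m lvlstar*(((k:ℝ)-1)*((2*(m:ℝ)*pmax-1)*B2 m lvlstar
            + (2*(m:ℝ)-1)) + Real.exp ε*(2*(m:ℝ)-1))) * e2
          + ((((k:ℝ)-1)*((2*(m:ℝ)*pmax-1)*B2 m lvlstar + (2*(m:ℝ)-1))
            + Real.exp ε*(2*(m:ℝ)-1)) - Real.exp ε*(2*(m:ℝ)-1)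
            - (2*(m:ℝ)-1)*((k:ℝ)-1)) * hbprod
          + (-(2*(m:ℝ)-1)*B2 m lvlstar) * hEA
      exact mul_right_cancel₀ hAD.ne' hG
    have htW : (1-lgr)*B2 m lvl*(((k:ℝ)-1)*((2*(m:ℝ)*pmax-1)*B2 m lvl + (2*(m:ℝ)-1))
        + Real.exp ε*(2*(m:ℝ)-1)) ≤ Real.exp ε*(2*(m:ℝ)-1)*B2 m lvl := by
      linarith only [mul_le_mul_of_nonneg_right ha2 hb0.le]
    have hfac : 0 ≤ (B2 m lvlstar - B2 m lvl)
        * (Real.exp ε*(2*(m:ℝ)-1)*(((k:ℝ)-1)*(2*(m:ℝ)-1) + Real.exp ε*(2*(m:ℝ)-1))) := by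
      apply mul_nonneg (sub_nonneg.2 hbleb)
      have h1 : 0 < ((k:ℝ)-1)*(2*(m:ℝ)-1) + Real.exp ε*(2*(m:ℝ)-1) := by
        linarith only [mul_pos (by linarith only [hk1] : (0:ℝ) < (k:ℝ)-1) h2m1, mul_pos hE0 h2m1]
      linarith only [mul_pos (mul_pos hE0 h2m1) h1]
    have s2 : Real.exp ε*(2*(m:ℝ)-1)*B2 m lvl
          * (((k:ℝ)-1)*((2*(m:ℝ)*pmax-1)*B2 m lvlstar + (2*(m:ℝ)-1)) + Real.exp ε*(2*(m:ℝ)-1))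
        ≤ Real.exp ε*(2*(m:ℝ)-1)*B2 m lvlstar
          * (((k:ℝ)-1)*((2*(m:ℝ)*pmax-1)*B2 m lvl + (2*(m:ℝ)-1)) + Real.exp ε*(2*(m:ℝ)-1)) := by
      linarith only [hfac]
    have s1 := mul_le_mul_of_nonneg_right htW
      (le_of_lt hWs)
    have s3 : Real.exp ε*(2*(m:ℝ)-1)*B2 m lvlstar
          * (((k:ℝ)-1)*((2*(m:ℝ)*pmax-1)*B2 m lvl + (2*(m:ℝ)-1)) + Real.exp ε*(2*(m:ℝ)-1))
        = ((1-lgrstar)*B2 m lvlstar)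
          * ((((k:ℝ)-1)*((2*(m:ℝ)*pmax-1)*B2 m lvl + (2*(m:ℝ)-1)) + Real.exp ε*(2*(m:ℝ)-1))
            * (((k:ℝ)-1)*((2*(m:ℝ)*pmax-1)*B2 m lvlstar + (2*(m:ℝ)-1))
              + Real.exp ε*(2*(m:ℝ)-1))) := by
      linear_combination (((k:ℝ)-1)*((2*(m:ℝ)*pmax-1)*B2 m lvl + (2*(m:ℝ)-1))
        + Real.exp ε*(2*(m:ℝ)-1)) * htsW.symm
    have hchain : ((1-lgr)*B2 m lvl)
          * ((((k:ℝ)-1)*((2*(m:ℝ)*pmax-1)*B2 m lvl + (2*(m:ℝ)-1)) + Real.exp ε*(2*(m:ℝ)-1))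
            * (((k:ℝ)-1)*((2*(m:ℝ)*pmax-1)*B2 m lvlstar + (2*(m:ℝ)-1))
              + Real.exp ε*(2*(m:ℝ)-1)))
        ≤ ((1-lgrstar)*B2 m lvlstar)
          * ((((k:ℝ)-1)*((2*(m:ℝ)*pmax-1)*B2 m lvl + (2*(m:ℝ)-1)) + Real.exp ε*(2*(m:ℝ)-1))
            * (((k:ℝ)-1)*((2*(m:ℝ)*pmax-1)*B2 m lvlstar + (2*(m:ℝ)-1))
              + Real.exp ε*(2*(m:ℝ)-1))) := by
      linarith only [s1, s2, s3]
    have hts : (1-lgr)*B2 m lvl ≤ (1-lgrstar)*B2 m lvlstar :=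
      le_of_mul_le_mul_right hchain (mul_pos hW hWs)
    have htpos : 0 < (1-lgr)*B2 m lvl := mul_pos ha hb0
    rw [B3_eq' k m c lgrstar lvlstar (by linarith only [hlgrIoo.2]) hbstarpos.ne',
        B3_eq' k m c lgr lvl ha.ne' hb0.ne']
    exact B3aux' (m:ℝ) c ((1-lgr)*B2 m lvl) ((1-lgrstar)*B2 m lvlstar)
      hm1 hc0 htpos hts htstarle
end
end

section
/- Fix a total communication budget b such that b/log₂(2m) and b/log₂(2km) are positive integers. Unless k = 2, m = 1 and p₁(v) = p₂(v') ≠ 1/2 for all v, v' ∈ {−1, 1}, there exists ε_ℓ > 0 such that for all ε > ε_ℓ, the relative errors satisfy E_QA(ε, b) > E_RG(ε, b); i.e., in the low-privacy regime the RG scheme outperforms the Q&A scheme. (Theorem 3, part (ii).) -/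
open scoped BigOperators

noncomputable section

/-- The Q&A privacy ratio `R_QA(λ)`:
`max_{g≠g', v,v'} ((2m(1−λ)−1)p_g(v)+λ)/((2m(1−λ)−1)p_{g'}(v')+λ)`. -/
def RQA (k m : ℕ) (p : Fin k → Vt m → ℝ) (lam : ℝ) : ℝ :=
  ⨆ gg : {x : Fin k × Fin k // x.1 ≠ x.2}, ⨆ vv : Vt m × Vt m,
    ((2*m*(1 - lam) - 1) * p gg.1.1 vv.1 + lam) /
    ((2*m*(1 - lam) - 1) * p gg.1.2 vv.2 + lam)

/-- The Q&A relative-error coefficient `α(λ)` (with `c = E[V²]`). -/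
def alphaQA (k m : ℕ) (c lam : ℝ) : ℝ :=
  2*m*lam*c / (2*m - 2*m*lam - 1)
    + (4*m^2 - 1) * (m + 1) * ((2*m - 1) * ((k : ℝ) - 1) + 2*m*lam)
        / (6 * (2*m - 2*m*lam - 1)^2)

/-- The RG privacy ratio `R_RG(λ_gr, λ_vl)`. -/
def RRG (k m : ℕ) (pmax pmin lgr lvl : ℝ) : ℝ :=
  max (B1 k m lgr * (pmax * B2 m lvl + lvl))
      (1 / (B1 k m lgr * (pmin * B2 m lvl + lvl)))

/-- Relative error of the Q&A scheme at privacy `ε` and fixed total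
communication budget `b`: `(log₂(2m)/b)·inf{α(λ) : λ feasible, R_QA(λ) ≤ e^ε}`. -/
def EQA (k m : ℕ) (p : Fin k → Vt m → ℝ) (c ε b : ℝ) : ℝ :=
  (Real.logb 2 (2*m) / b) *
    sInf {y | ∃ lam ∈ Set.Ico (0:ℝ) (1 - 1/(2*m)),
      RQA k m p lam ≤ Real.exp ε ∧ y = alphaQA k m c lam}

/-- Relative error of the RG scheme at privacy `ε` and fixed total
communication budget `b`:
`(log₂(2km)/b)·inf{β₃(λ_gr,λ_vl) : parameters feasible, R_RG ≤ e^ε}`. -/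
def ERG (k m : ℕ) (pmax pmin c ε b : ℝ) : ℝ :=
  (Real.logb 2 (2*k*m) / b) *
    sInf {y | ∃ lgr ∈ Set.Ioo (0:ℝ) 1, ∃ lvl ∈ Set.Ico (0:ℝ) (1 - 1/(2*m)),
      RRG k m pmax pmin lgr lvl ≤ Real.exp ε ∧ y = B3 k m c lgr lvl}
set_option maxHeartbeats 4000000 in
/-- Theorem 3 (ii): fix a total communication budget `b` with
`b/log₂(2m)` and `b/log₂(2km)` positive integers. Unless `k = 2`, `m = 1` and
`p₁(v) = p₂(v') ≠ 1/2` for all `v, v' ∈ {−1,1}`, there exists `ε_ℓ > 0` such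
that for all `ε > ε_ℓ` the relative errors satisfy
`E_QA(ε, b) > E_RG(ε, b)`. -/
theorem stmt18 (m k : ℕ) (hm : 0 < m) (hk : 2 ≤ k)
    (p : Fin k → Vt m → ℝ)
    (hpsum : ∀ g, ∑ v : Vt m, p g v = 1)
    (hp : ∀ g v, 0 < p g v ∧ p g v < 1)
    (θ : Fin k → ℝ) (hθ0 : ∀ g, 0 ≤ θ g) (hθ1 : ∑ g, θ g = 1)
    (pmax pmin c : ℝ)
    (hpmax : pmax = ⨆ g, ⨆ v, p g v)
    (hpmin : pmin = ⨅ g, ⨅ v, p g v)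
    (hc : c = ∑ g : Fin k, θ g * ∑ v : Vt m, ((v : ℤ) : ℝ)^2 * p g v)
    (b : ℝ)
    (hb1 : ∃ n1 : ℕ, 0 < n1 ∧ b / Real.logb 2 (2*m) = n1)
    (hb2 : ∃ n2 : ℕ, 0 < n2 ∧ b / Real.logb 2 (2*k*m) = n2)
    (hexc : ¬ (k = 2 ∧ m = 1 ∧ ∀ v v' : Vt m,
        p ⟨0, by omega⟩ v = p ⟨1, by omega⟩ v' ∧ p ⟨0, by omega⟩ v ≠ 1/2)) :
    ∃ εl > 0, ∀ ε : ℝ, εl < ε →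
      ERG k m pmax pmin c ε b < EQA k m p c ε b := by
    -- Abbreviations and basic positivity facts
  have hM : (1:ℝ) ≤ (m:ℝ) := by exact_mod_cast hm
  have hk' : (2:ℝ) ≤ (k:ℝ) := by exact_mod_cast hk
  have hDpos : (0:ℝ) < 2*(m:ℝ) - 1 := by linarith
  have hD1 : (1:ℝ) ≤ 2*(m:ℝ) - 1 := by linarith
  have hIco : (0:ℝ) < 1 - 1/(2*(m:ℝ)) := by
    have h1 : 1/(2*(m:ℝ)) ≤ 1/2 := by
      apply one_div_le_one_div_of_le <;> linarith
    linarith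
  have hc0 : 0 ≤ c := by
    rw [hc]
    apply Finset.sum_nonneg
    intro g _
    apply mul_nonneg (hθ0 g)
    apply Finset.sum_nonneg
    intro v _
    exact mul_nonneg (sq_nonneg _) (hp g v).1.le
  -- the two logs are positive, hence b > 0
  have hL1 : 0 < Real.logb 2 (2*(m:ℝ)) := Real.logb_pos one_lt_two (by linarith)
  have hL2 : 0 < Real.logb 2 (2*(k:ℝ)*(m:ℝ)) := Real.logb_pos one_lt_two (by nlinarith)
  have hb : 0 < b := by
    obtain ⟨n1, hn1, he1⟩ := hb1
    rw [div_eq_iff (ne_of_gt hL1)] at he1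
    rw [he1]
    have : (0:ℝ) < n1 := by exact_mod_cast hn1
    exact mul_pos this hL1
  clear hpsum hp hθ0 hθ1 hc hpmax hpmin hb1 hb2 hexc hm hk θ
  -- The Q&A error lower bound constant A
  set P : ℝ := (4*(m:ℝ)^2 - 1) * ((m:ℝ) + 1) with hPdef
  have hP : 0 < P := by
    apply mul_pos _ (by linarith)
    nlinarith
  set A : ℝ := P * ((2*(m:ℝ) - 1) * ((k:ℝ) - 1)) / (6 * (2*(m:ℝ) - 1)^2) with hAdef
  have hA : 0 < A := by
    apply div_pos
    · apply mul_pos hP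
      apply mul_pos hDpos
      linarith
    · positivity
  -- parameters for the RG witness
  set K : ℝ := 2*c + 2*P/(3*(2*(m:ℝ) - 1)) with hKdef
  have hK : 0 < K := by
    rw [hKdef]
    have h2 : 0 < 2*P/(3*(2*(m:ℝ) - 1)) := by positivity
    linarith
  set T : ℝ := Real.logb 2 (2*(m:ℝ)) * A / Real.logb 2 (2*(k:ℝ)*(m:ℝ)) with hTdef
  have hT : 0 < T := div_pos (mul_pos hL1 hA) hL2
  set δ : ℝ := min (1/2) (T/(2*K)) with hδdef
  have hδ0 : 0 < δ := lt_min (by norm_num) (by positivity)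
  have hδhalf : δ ≤ 1/2 := min_le_left _ _
  have hδT : δ ≤ T/(2*K) := min_le_right _ _
  clear_value P A K T δ
  have h1δ : (0:ℝ) < 1 - δ := by linarith
  -- value of B2 at 0
  have hB20 : B2 m 0 = 2*(m:ℝ) - 1 := by simp [B2]
  -- bound on B3 at the witness point (δ, 0)
  have hb3 : B3 k m c δ 0 ≤ δ * K := by
    rw [B3, hB20]
    have e1 : (2*(m:ℝ) - 1) / ((1 - δ) * (2*(m:ℝ) - 1)) - 1 = δ/(1-δ) := by
      field_simp
      ring
    have t1 : c * ((2*(m:ℝ) - 1) / ((1 - δ) * (2*(m:ℝ) - 1)) - 1) ≤ 2*c*δ := by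
      rw [e1, mul_div_assoc']
      rw [div_le_iff₀ h1δ]
      nlinarith [mul_nonneg (mul_nonneg hc0 hδ0.le) (by linarith : (0:ℝ) ≤ 1 - 2*δ)]
    have t2 : (4*(m:ℝ)^2 - 1) * ((m:ℝ) + 1) * (2*(m:ℝ)*0*(1 - δ) + δ*(2*(m:ℝ) - 1))
        / (6 * (1 - δ)^2 * (2*(m:ℝ) - 1)^2) ≤ 2*P*δ/(3*(2*(m:ℝ) - 1)) := by
      rw [← hPdef, div_le_div_iff₀ (by positivity) (by positivity)]
      have hq : (1/2:ℝ)*(1/2) ≤ (1-δ)*(1-δ) :=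
        mul_le_mul (by linarith) (by linarith) (by norm_num) (by linarith)
      have h12 : (3:ℝ) ≤ 12*(1-δ)^2 := by rw [pow_two]; linarith
      have hPd : 0 ≤ P * δ * ((2*(m:ℝ)-1) * (2*(m:ℝ)-1)) :=
        (mul_pos (mul_pos hP hδ0) (mul_pos hDpos hDpos)).le
      nlinarith [mul_le_mul_of_nonneg_left h12 hPd]
    have hKeq : δ * K = 2*c*δ + 2*P*δ/(3*(2*(m:ℝ) - 1)) := by
      rw [hKdef]; field_simp
    rw [hKeq]
    exact add_le_add t1 t2
  have hb3T : B3 k m c δ 0 < T := by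
    have h1 : δ * K ≤ (T/(2*K)) * K :=
      mul_le_mul_of_nonneg_right hδT hK.le
    have h2 : (T/(2*K)) * K = T/2 := by field_simp
    have := h1.trans_eq h2
    linarith
  -- choose the privacy threshold
  set Mb : ℝ := max (RRG k m pmax pmin δ 0) (max (RQA k m p 0) 1) with hMbdef
  have hMb1 : (1:ℝ) ≤ Mb := le_trans (le_max_right _ _) (le_max_right _ _)
  refine ⟨Real.log Mb + 1, by nlinarith [Real.log_nonneg hMb1], ?_⟩
  intro ε hε
  have hMbε : Mb ≤ Real.exp ε := by
    have h1 : Mb = Real.exp (Real.log Mb) := (Real.exp_log (by linarith)).symm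
    rw [h1]
    exact Real.exp_le_exp.mpr (by linarith)
  have hRQA0 : RQA k m p 0 ≤ Real.exp ε :=
    le_trans (le_trans (le_max_left _ _) (le_max_right _ _)) hMbε
  have hRRG0 : RRG k m pmax pmin δ 0 ≤ Real.exp ε := le_trans (le_max_left _ _) hMbε
  -- the Q&A feasible set and its lower bound
  set SQ : Set ℝ := {y | ∃ lam ∈ Set.Ico (0:ℝ) (1 - 1/(2*(m:ℝ))),
      RQA k m p lam ≤ Real.exp ε ∧ y = alphaQA k m c lam} with hSQdef
  have hSQne : SQ.Nonempty := ⟨alphaQA k m c 0, 0, ⟨le_refl 0, hIco⟩, hRQA0, rfl⟩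
  have hSQlb : ∀ y ∈ SQ, A ≤ y := by
    rintro y ⟨lam, ⟨hl0, hl1⟩, -, rfl⟩
    have hden : (0:ℝ) < 2*(m:ℝ) - 2*(m:ℝ)*lam - 1 := by
      have h2M : (0:ℝ) < 2*(m:ℝ) := by linarith
      have := (div_lt_iff₀ h2M).mp (by linarith : 1/(2*(m:ℝ)) < 1 - lam)
      nlinarith
    have hdenD : 2*(m:ℝ) - 2*(m:ℝ)*lam - 1 ≤ 2*(m:ℝ) - 1 := by nlinarith
    rw [alphaQA]
    have ht1 : 0 ≤ 2*(m:ℝ)*lam*c / (2*(m:ℝ) - 2*(m:ℝ)*lam - 1) := by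
      apply div_nonneg _ hden.le
      have : (0:ℝ) ≤ 2*(m:ℝ)*lam := by nlinarith
      exact mul_nonneg this hc0
    have ht2 : A ≤ (4*(m:ℝ)^2 - 1) * ((m:ℝ) + 1) * ((2*(m:ℝ) - 1) * ((k:ℝ) - 1) + 2*(m:ℝ)*lam)
        / (6 * (2*(m:ℝ) - 2*(m:ℝ)*lam - 1)^2) := by
      rw [hAdef, hPdef]
      apply div_le_div₀
      · have h1 : (0:ℝ) ≤ (4*(m:ℝ)^2 - 1) * ((m:ℝ) + 1) := by nlinarith
        apply mul_nonneg h1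
        nlinarith
      · apply mul_le_mul_of_nonneg_left _ (by nlinarith : (0:ℝ) ≤ (4*(m:ℝ)^2 - 1) * ((m:ℝ) + 1))
        nlinarith
      · positivity
      · nlinarith
    linarith
  have hEQA : Real.logb 2 (2*(m:ℝ)) / b * A ≤ EQA k m p c ε b := by
    rw [EQA]
    exact mul_le_mul_of_nonneg_left (le_csInf hSQne hSQlb) (div_pos hL1 hb).le
  -- the RG feasible set: bounded below by 0 and contains the witness value
  set SR : Set ℝ := {y | ∃ lgr ∈ Set.Ioo (0:ℝ) 1, ∃ lvl ∈ Set.Ico (0:ℝ) (1 - 1/(2*(m:ℝ))),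
      RRG k m pmax pmin lgr lvl ≤ Real.exp ε ∧ y = B3 k m c lgr lvl} with hSRdef
  have hSRbdd : BddBelow SR := by
    refine ⟨0, ?_⟩
    rintro y ⟨lgr, ⟨hg0, hg1⟩, lvl, ⟨hv0, hv1⟩, -, rfl⟩
    have h1g : (0:ℝ) < 1 - lgr := by linarith
    have hB2 : 0 < B2 m lvl := by
      rw [B2]
      have h2M : (0:ℝ) < 2*(m:ℝ) := by linarith
      have := (div_lt_iff₀ h2M).mp (by linarith : 1/(2*(m:ℝ)) < 1 - lvl)
      nlinarith
    have hB2le : B2 m lvl ≤ 2*(m:ℝ) - 1 := by rw [B2]; nlinarith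
    rw [B3]
    have ht1 : 0 ≤ c * ((2*(m:ℝ) - 1) / ((1 - lgr) * B2 m lvl) - 1) := by
      apply mul_nonneg hc0
      have h1 : 1 ≤ (2*(m:ℝ) - 1) / ((1 - lgr) * B2 m lvl) := by
        rw [one_le_div (mul_pos h1g hB2)]
        nlinarith
      linarith
    have ht2 : 0 ≤ (4*(m:ℝ)^2 - 1) * ((m:ℝ) + 1) * (2*(m:ℝ)*lvl*(1 - lgr) + lgr*(2*(m:ℝ) - 1))
        / (6 * (1 - lgr)^2 * (B2 m lvl)^2) := by
      apply div_nonneg _ (by positivity)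
      apply mul_nonneg (by nlinarith)
      have q1 : 0 ≤ 2*(m:ℝ)*lvl*(1-lgr) :=
        mul_nonneg (mul_nonneg (by linarith) hv0) h1g.le
      have q2 : 0 ≤ lgr*(2*(m:ℝ)-1) := mul_nonneg hg0.le hDpos.le
      linarith
    linarith
  have hSRmem : B3 k m c δ 0 ∈ SR :=
    ⟨δ, ⟨hδ0, by linarith⟩, 0, ⟨le_refl 0, hIco⟩, hRRG0, rfl⟩
  have hERG : ERG k m pmax pmin c ε b ≤ Real.logb 2 (2*(k:ℝ)*(m:ℝ)) / b * B3 k m c δ 0 := by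
    rw [ERG]
    exact mul_le_mul_of_nonneg_left (csInf_le hSRbdd hSRmem) (div_pos hL2 hb).le
  -- the strict middle inequality
  have hmid : Real.logb 2 (2*(k:ℝ)*(m:ℝ)) / b * B3 k m c δ 0
      < Real.logb 2 (2*(m:ℝ)) / b * A := by
    rw [div_mul_eq_mul_div, div_mul_eq_mul_div, div_lt_div_iff_of_pos_right hb]
    have h1 : Real.logb 2 (2*(k:ℝ)*(m:ℝ)) * B3 k m c δ 0
        < Real.logb 2 (2*(k:ℝ)*(m:ℝ)) * T := by
      exact mul_lt_mul_of_pos_left hb3T hL2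
    have h2 : Real.logb 2 (2*(k:ℝ)*(m:ℝ)) * T = Real.logb 2 (2*(m:ℝ)) * A := by
      rw [hTdef]; field_simp
    linarith
  calc ERG k m pmax pmin c ε b ≤ _ := hERG
    _ < _ := hmid
    _ ≤ EQA k m p c ε b := hEQA
end
end
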